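/- If A is orthogonal with first row (1/√n,…,1/√n) and y = A x, then ∑ᵢ (xᵢ - μ)² = ∑_{i=2}^{n} yᵢ² + (y₁ - √n μ)², so the joint Gaussian density in the y-coordinates splits as a product of one-dimensional Gaussian densities: N(√n μ, σ²) for y₁ and N(0, σ²) for y₂,…,yₙ. -/

import Mathlib

/-!
`A` is an isometry, so `∑ (xᵢ - μ)²` is the squared norm of `A (x - μ𝟙)`. The constant vector
`𝟙 / √n` is the first row of `A`, i.e. `Aᵀ e₀`, hence `A (μ𝟙) = √n μ e₀` and
`A (x - μ𝟙) = y - √n μ e₀`.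
-/

open Matrix

theorem Matrix.sum_mulVec_sq_of_transpose_mul_self_eq_one {m n R : Type*} [Fintype m] [Fintype n]
    [DecidableEq n] [CommSemiring R] {A : Matrix m n R} (hA : Aᵀ * A = 1) (x : n → R) :
    ∑ i, (A *ᵥ x) i ^ 2 = ∑ j, x j ^ 2 := by
  have h : (A *ᵥ x) ⬝ᵥ (A *ᵥ x) = x ⬝ᵥ x := by
    rw [dotProduct_mulVec, ← mulVec_transpose, mulVec_mulVec, hA, one_mulVec]
  simpa only [dotProduct, sq] using h

theorem Matrix.mulVec_eq_single_of_row_eq {n R : Type*} [Fintype n] [DecidableEq n] [CommRing R]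
    {A : Matrix n n R} (hA : Aᵀ * A = 1) {i₀ : n} {c : R} (hrow : ∀ j, A i₀ j = c) :
    A *ᵥ (fun _ => c) = Pi.single i₀ 1 := by
  have hc : (fun _ => c) = Aᵀ *ᵥ Pi.single i₀ 1 := by
    ext j
    simp [mulVec_single, hrow]
  rw [hc, mulVec_mulVec, mul_eq_one_comm.mp hA, one_mulVec]

theorem Finset.sum_sub_single_sq {ι R : Type*} [Fintype ι] [DecidableEq ι] [CommRing R]
    (f : ι → R) (i₀ : ι) (a : R) :
    ∑ i, (f i - (Pi.single i₀ a : ι → R) i) ^ 2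
      = (f i₀ - a) ^ 2 + ∑ i ∈ univ.erase i₀, f i ^ 2 := by
  rw [← add_sum_erase _ _ (mem_univ i₀)]
  congr 1
  · simp
  · refine sum_congr rfl fun i hi => ?_
    simp [Pi.single_eq_of_ne (ne_of_mem_erase hi)]

theorem sum_sq_split_first (n : ℕ) (hn : 1 ≤ n) (μ : ℝ)
    (A : Matrix (Fin n) (Fin n) ℝ) (hA : Aᵀ * A = 1)
    (hrow : ∀ j, A ⟨0, hn⟩ j = 1 / Real.sqrt n)
    (x : Fin n → ℝ) :
    ∑ i, (x i - μ) ^ 2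
      = (A.mulVec x ⟨0, hn⟩ - Real.sqrt n * μ) ^ 2
        + ∑ i ∈ Finset.univ.erase ⟨0, hn⟩, (A.mulVec x i) ^ 2 := by
  have hmean : A *ᵥ (fun _ => μ) = Pi.single ⟨0, hn⟩ (Real.sqrt n * μ) := by
    have hsqrt : Real.sqrt n ≠ 0 := (Real.sqrt_pos.mpr (by exact_mod_cast hn)).ne'
    have hconst : (fun _ => μ) = (Real.sqrt n * μ) • fun _ : Fin n => 1 / Real.sqrt n := by
      ext
      simp [field]
    rw [hconst, mulVec_smul, mulVec_eq_single_of_row_eq hA hrow, ← Pi.single_smul, smul_eq_mul,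
      mul_one]
  calc ∑ i, (x i - μ) ^ 2 = ∑ i, (A *ᵥ (x - fun _ => μ)) i ^ 2 :=
        (sum_mulVec_sq_of_transpose_mul_self_eq_one hA _).symm
    _ = _ := by
      rw [mulVec_sub, hmean]
      exact Finset.sum_sub_single_sq _ _ _
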